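/- If θ ↦ w_s(θ)·w_g(θ) is monotone nonincreasing on [0, π], then for every y ∈ ℝ and every x ≥ Δ/2 one has SINR(x − Δ, y) ≥ SINR(x, y); symmetrically, for every x ≤ −Δ/2, SINR(x + Δ, y) ≥ SINR(x, y). -/
import Mathlib


open Real

/-- Distance from ground point `(x, y, 0)` to satellite `s_{i,j} = (iΔ/2, j√3Δ/2, h)`. -/
noncomputable def Dfun (Δ h : ℝ) (i j : ℤ) (x y : ℝ) : ℝ :=
  Real.sqrt ((x - i * Δ / 2) ^ 2 + (y - j * Real.sqrt 3 * Δ / 2) ^ 2 + h ^ 2)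

/-- Off-axis angle `θ_{i,j}(x,y) = arccos(h / D_{i,j}(x,y))`. -/
noncomputable def θfun (Δ h : ℝ) (i j : ℤ) (x y : ℝ) : ℝ :=
  Real.arccos (h / Dfun Δ h i j x y)

/-- Combined beam attenuation `W_{i,j}(x,y) = w_s(θ_{i,j}(x,y))·w_g(θ_{i,j}(x,y))`. -/
noncomputable def Wfun (ws wg : ℝ → ℝ) (Δ h : ℝ) (i j : ℤ) (x y : ℝ) : ℝ :=
  ws (θfun Δ h i j x y) * wg (θfun Δ h i j x y)

/-- Signal-to-noise ratio at the ground point `(x, y)`, served by satellite `s_{0,0}`. -/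
noncomputable def SNR (ws wg : ℝ → ℝ) (Δ h α p σ2 : ℝ) (x y : ℝ) : ℝ :=
  (p / σ2) * Dfun Δ h 0 0 x y ^ (-α) * Wfun ws wg Δ h 0 0 x y

/-- Interference-to-noise ratio at the ground point `(x, y)`: sum over all satellites
`(i,j)` with `i ≡ j (mod 2)` other than `(0,0)`. -/
noncomputable def INR (ws wg : ℝ → ℝ) (Δ h α p σ2 : ℝ) (x y : ℝ) : ℝ :=
  (p / σ2) * ∑' q : ℤ × ℤ,
    if q.1 % 2 = q.2 % 2 ∧ q ≠ (0, 0) then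
      Dfun Δ h q.1 q.2 x y ^ (-α) * Wfun ws wg Δ h q.1 q.2 x y
    else 0

/-- `SINR(x,y) = SNR(x,y) / (INR(x,y) + 1)`. -/
noncomputable def SINR (ws wg : ℝ → ℝ) (Δ h α p σ2 : ℝ) (x y : ℝ) : ℝ :=
  SNR ws wg Δ h α p σ2 x y / (INR ws wg Δ h α p σ2 x y + 1)

lemma h_le_Dfun (Δ h : ℝ) (hh : 0 < h) (i j : ℤ) (x y : ℝ) : h ≤ Dfun Δ h i j x y := by
  have : h = Real.sqrt (h ^ 2) := by rw [Real.sqrt_sq hh.le]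
  rw [this]
  apply Real.sqrt_le_sqrt
  nlinarith [sq_nonneg (x - i * Δ / 2), sq_nonneg (y - j * Real.sqrt 3 * Δ / 2)]

lemma Dfun_pos (Δ h : ℝ) (hh : 0 < h) (i j : ℤ) (x y : ℝ) : 0 < Dfun Δ h i j x y :=
  lt_of_lt_of_le hh (h_le_Dfun Δ h hh i j x y)

lemma θ_mem (Δ h : ℝ) (i j : ℤ) (x y : ℝ) : θfun Δ h i j x y ∈ Set.Icc (0:ℝ) π :=
  ⟨Real.arccos_nonneg _, Real.arccos_le_pi _⟩

lemma Dfun_shift (Δ h : ℝ) (m i j : ℤ) (x y : ℝ) :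
    Dfun Δ h (i + 2 * m) j x y = Dfun Δ h i j (x - m * Δ) y := by
  unfold Dfun
  congr 1
  push_cast
  ring

/-- Key pointwise monotonicity: smaller distance gives bigger term. -/
lemma term_mono (ws wg : ℝ → ℝ) (Δ h α : ℝ) (hh : 0 < h) (hα : 0 ≤ α)
    (hwsnn : ∀ θ ∈ Set.Icc (0 : ℝ) π, 0 ≤ ws θ)
    (hwgnn : ∀ θ ∈ Set.Icc (0 : ℝ) π, 0 ≤ wg θ)
    (hmono : AntitoneOn (fun θ => ws θ * wg θ) (Set.Icc (0 : ℝ) π))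
    (x x' y : ℝ) (hD : Dfun Δ h 0 0 x' y ≤ Dfun Δ h 0 0 x y) :
    Dfun Δ h 0 0 x y ^ (-α) * Wfun ws wg Δ h 0 0 x y ≤
      Dfun Δ h 0 0 x' y ^ (-α) * Wfun ws wg Δ h 0 0 x' y := by
  have hD'pos := Dfun_pos Δ h hh 0 0 x' y
  have hDpos := Dfun_pos Δ h hh 0 0 x y
  have h1 : Dfun Δ h 0 0 x y ^ (-α) ≤ Dfun Δ h 0 0 x' y ^ (-α) :=
    Real.rpow_le_rpow_of_nonpos hD'pos hD (neg_nonpos.mpr hα)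
  have hθ : θfun Δ h 0 0 x y ∈ Set.Icc (0:ℝ) π := θ_mem _ _ _ _ _ _
  have hθ' : θfun Δ h 0 0 x' y ∈ Set.Icc (0:ℝ) π := θ_mem _ _ _ _ _ _
  have hθle : θfun Δ h 0 0 x' y ≤ θfun Δ h 0 0 x y := by
    unfold θfun Real.arccos
    have : Real.arcsin (h / Dfun Δ h 0 0 x y) ≤ Real.arcsin (h / Dfun Δ h 0 0 x' y) := by
      apply Real.monotone_arcsin
      exact div_le_div_of_nonneg_left hh.le hD'pos hD
    linarith
  have h2 : Wfun ws wg Δ h 0 0 x y ≤ Wfun ws wg Δ h 0 0 x' y := hmono hθ' hθ hθle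
  have h3 : 0 ≤ Wfun ws wg Δ h 0 0 x y :=
    mul_nonneg (hwsnn _ hθ) (hwgnn _ hθ)
  have h4 : 0 ≤ Dfun Δ h 0 0 x' y ^ (-α) := Real.rpow_nonneg hD'pos.le _
  exact mul_le_mul h1 h2 h3 h4

lemma sinr_mono_aux (c T a b : ℝ) (hc : 0 < c) (ha : 0 ≤ a) (hab : a ≤ b) (hbT : b ≤ T) :
    c * a / (c * (T - a) + 1) ≤ c * b / (c * (T - b) + 1) := by
  have hd1 : 0 < c * (T - a) + 1 := by nlinarith
  have hd2 : 0 < c * (T - b) + 1 := by nlinarith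
  rw [div_le_div_iff₀ hd1 hd2]
  have hT : (0:ℝ) ≤ T := le_trans ha (hab.trans hbT)
  nlinarith [mul_nonneg (mul_nonneg hc.le hc.le) (mul_nonneg (sub_nonneg.2 hab) hT),
    mul_nonneg hc.le (sub_nonneg.2 hab)]

lemma sinr_key (ws wg : ℝ → ℝ) (Δ h α p σ2 : ℝ)
    (hh : 0 < h) (hα : 2 ≤ α) (hp : 0 < p) (hσ : 0 < σ2)
    (hwsnn : ∀ θ ∈ Set.Icc (0 : ℝ) π, 0 ≤ ws θ)
    (hwgnn : ∀ θ ∈ Set.Icc (0 : ℝ) π, 0 ≤ wg θ)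
    (hsum : ∀ x y : ℝ, Summable fun q : ℤ × ℤ =>
      if q.1 % 2 = q.2 % 2 ∧ q ≠ (0, 0) then
        Dfun Δ h q.1 q.2 x y ^ (-α) * Wfun ws wg Δ h q.1 q.2 x y
      else 0)
    (hmono : AntitoneOn (fun θ => ws θ * wg θ) (Set.Icc (0 : ℝ) π))
    (x y : ℝ) (m : ℤ) (hx2 : (x - m * Δ) ^ 2 ≤ x ^ 2) :
    SINR ws wg Δ h α p σ2 x y ≤ SINR ws wg Δ h α p σ2 (x - m * Δ) y := by
  set c : ℝ := p / σ2 with hc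
  have hcpos : 0 < c := div_pos hp hσ
  set u : ℝ → ℝ := fun t => Dfun Δ h 0 0 t y ^ (-α) * Wfun ws wg Δ h 0 0 t y with hu_def
  set g : ℝ → ℤ × ℤ → ℝ := fun t q =>
    if q.1 % 2 = q.2 % 2 then
      Dfun Δ h q.1 q.2 t y ^ (-α) * Wfun ws wg Δ h q.1 q.2 t y
    else 0 with hg_def
  set F : ℝ → ℤ × ℤ → ℝ := fun t q =>
    if q.1 % 2 = q.2 % 2 ∧ q ≠ (0, 0) then
      Dfun Δ h q.1 q.2 t y ^ (-α) * Wfun ws wg Δ h q.1 q.2 t y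
    else 0 with hF_def
  have hFsum : ∀ t, Summable (F t) := fun t => hsum t y
  have hgeq : ∀ t, g t = fun q => F t q + (if q = ((0:ℤ), (0:ℤ)) then u t else 0) := by
    intro t
    funext q
    by_cases hq : q = ((0:ℤ), (0:ℤ))
    · subst hq
      simp [hg_def, hF_def, hu_def]
    · have hq0 : q ≠ 0 := by simpa [Prod.ext_iff] using hq
      simp [hg_def, hF_def, hq, hq0]
  have hGsum : ∀ t, Summable (fun q : ℤ × ℤ => if q = ((0:ℤ), (0:ℤ)) then u t else 0) :=
    fun t => (hasSum_ite_eq _ _).summable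
  have hgsum : ∀ t, Summable (g t) := by
    intro t
    rw [hgeq t]
    exact (hFsum t).add (hGsum t)
  have htsum : ∀ t, ∑' q, g t q = (∑' q, F t q) + u t := by
    intro t
    rw [hgeq t, Summable.tsum_add (hFsum t) (hGsum t), tsum_ite_eq]
  have hterm_nn : ∀ (i j : ℤ) (t : ℝ),
      0 ≤ Dfun Δ h i j t y ^ (-α) * Wfun ws wg Δ h i j t y := by
    intro i j t
    have hθ := θ_mem Δ h i j t y
    exact mul_nonneg (Real.rpow_nonneg (Dfun_pos Δ h hh i j t y).le _)
      (mul_nonneg (hwsnn _ hθ) (hwgnn _ hθ))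
  have hnn : ∀ t q, 0 ≤ g t q := by
    intro t q
    simp only [hg_def]
    split
    · exact hterm_nn _ _ _
    · exact le_rfl
  have huleT : ∀ t, u t ≤ ∑' q, g t q := by
    intro t
    have h0 : g t ((0:ℤ), (0:ℤ)) = u t := by simp [hg_def, hu_def]
    calc u t = g t ((0:ℤ), (0:ℤ)) := h0.symm
      _ ≤ ∑' q, g t q := Summable.le_tsum (hgsum t) _ (fun j _ => hnn t j)
  have hunn : ∀ t, 0 ≤ u t := fun t => hterm_nn 0 0 t
  have hshift : ∑' q, g (x - m * Δ) q = ∑' q, g x q := by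
    have heq : ∀ q : ℤ × ℤ, g x (q.1 + 2 * m, q.2) = g (x - m * Δ) q := by
      intro q
      have hpar : (q.1 + 2 * m) % 2 = q.1 % 2 := by omega
      have hDs : Dfun Δ h (q.1 + 2 * m) q.2 x y = Dfun Δ h q.1 q.2 (x - m * Δ) y :=
        Dfun_shift Δ h m q.1 q.2 x y
      simp only [hg_def, Wfun, θfun, hpar, hDs]
    calc ∑' q, g (x - m * Δ) q = ∑' q : ℤ × ℤ, g x (q.1 + 2 * m, q.2) := by
          exact tsum_congr (fun q => (heq q).symm)
      _ = ∑' q, g x q := by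
          exact (Equiv.prodCongr (Equiv.addRight (2 * m)) (Equiv.refl ℤ)).tsum_eq (g x)
  set T : ℝ := ∑' q, g x q with hT
  have hu2 : u x ≤ u (x - m * Δ) := by
    apply term_mono ws wg Δ h α hh (by linarith) hwsnn hwgnn hmono
    unfold Dfun
    apply Real.sqrt_le_sqrt
    push_cast
    nlinarith [hx2]
  have hINR : ∀ t, ∑' q, g t q = T → INR ws wg Δ h α p σ2 t y = c * (T - u t) := by
    intro t ht
    have : ∑' q, F t q = T - u t := by
      have := htsum t
      rw [ht] at this
      linarith
    rw [INR, this]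
  have hSINR : ∀ t, ∑' q, g t q = T →
      SINR ws wg Δ h α p σ2 t y = c * u t / (c * (T - u t) + 1) := by
    intro t ht
    rw [SINR, hINR t ht, SNR, mul_assoc]
  rw [hSINR x rfl, hSINR (x - m * Δ) hshift]
  exact sinr_mono_aux c T (u x) (u (x - m * Δ)) hcpos (hunn x) hu2
    (le_of_le_of_eq (huleT (x - m * Δ)) hshift)


/-- Translating a ground point located beyond half the inter-satellite spacing by one
lattice period toward the serving satellite does not decrease the SINR. -/
theorem sinr_translation_improves
    (ws wg : ℝ → ℝ) (Δ h α p σ2 : ℝ)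
    (hΔ : 0 < Δ) (hh : 0 < h) (hα : 2 ≤ α) (hp : 0 < p) (hσ : 0 < σ2)
    (hwsnn : ∀ θ ∈ Set.Icc (0 : ℝ) π, 0 ≤ ws θ)
    (hwgnn : ∀ θ ∈ Set.Icc (0 : ℝ) π, 0 ≤ wg θ)
    (hsum : ∀ x y : ℝ, Summable fun q : ℤ × ℤ =>
      if q.1 % 2 = q.2 % 2 ∧ q ≠ (0, 0) then
        Dfun Δ h q.1 q.2 x y ^ (-α) * Wfun ws wg Δ h q.1 q.2 x y
      else 0)
    (hmono : AntitoneOn (fun θ => ws θ * wg θ) (Set.Icc (0 : ℝ) π)) :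
    (∀ y x : ℝ, Δ / 2 ≤ x →
        SINR ws wg Δ h α p σ2 x y ≤ SINR ws wg Δ h α p σ2 (x - Δ) y) ∧
    (∀ y x : ℝ, x ≤ -(Δ / 2) →
        SINR ws wg Δ h α p σ2 x y ≤ SINR ws wg Δ h α p σ2 (x + Δ) y) := by
  constructor
  · intro y x hx
    have hx2 : (x - ((1:ℤ) : ℝ) * Δ) ^ 2 ≤ x ^ 2 := by push_cast; nlinarith
    have := sinr_key ws wg Δ h α p σ2 hh hα hp hσ hwsnn hwgnn hsum hmono x y 1 hx2
    push_cast at this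
    simpa using this
  · intro y x hx
    have hx2 : (x - ((-1:ℤ) : ℝ) * Δ) ^ 2 ≤ x ^ 2 := by push_cast; nlinarith
    have := sinr_key ws wg Δ h α p σ2 hh hα hp hσ hwsnn hwgnn hsum hmono x y (-1) hx2
    push_cast at this
    rw [show x - -1 * Δ = x + Δ by ring] at this
    exact this
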